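/- arXiv:1210.1597 — 5 statements merged into one kernel-verified Lean document; each statement's English description precedes it below -/
import Mathlib

section
/- Let H be a Hopf algebra over a field, C a unital subalgebra and left coideal of H, and define Ψ(C) = H·C⁺ where C⁺ = C ∩ ker(ε). Then Ψ(C) is a left ideal and two-sided coideal of H. -/
/- STATEMENT 1: if `C` is a unital subalgebra and left coideal of a Hopf algebra `H` over a
   field, then `Ψ(C) = H·C⁺` (with `C⁺ = C ∩ ker ε`) is a left ideal and two-sided coideal. -/

open scoped TensorProduct

namespace GQDP

variable (K : Type*) [Field K] (H : Type*) [Ring H] [HopfAlgebra K H]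

/-- The "tensor product" of two subspaces `A, B ⊆ H`, as a subspace of `H ⊗ H`:
    the span of the pure tensors `a ⊗ b` with `a ∈ A`, `b ∈ B`. -/
def tsub (A B : Submodule K H) : Submodule K (H ⊗[K] H) :=
  Submodule.span K {z | ∃ a ∈ A, ∃ b ∈ B, z = a ⊗ₜ[K] b}

/-- `Ψ(C) := H·C⁺`, where `C⁺ = C ∩ ker ε`. -/
def Psi (C : Submodule K H) : Submodule K H :=
  Submodule.span K
    {x | ∃ h : H, ∃ c ∈ C, Coalgebra.counit (R := K) c = 0 ∧ x = h * c}

/-- Multiplying anything on the left into `H ⊗ B` stays in `H ⊗ D`, provided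
    left multiples of elements of `B` land in `D`. -/
lemma mul_mem_tsub_right (B D : Submodule K H)
    (hBD : ∀ (y b : H), b ∈ B → y * b ∈ D)
    (u : H ⊗[K] H) (w : H ⊗[K] H) (hw : w ∈ tsub K H ⊤ B) :
    u * w ∈ tsub K H ⊤ D := by
  induction hw using Submodule.span_induction with
  | mem z hz =>
      obtain ⟨a, -, b, hb, rfl⟩ := hz
      induction u using TensorProduct.induction_on with
      | zero => simpa using (tsub K H ⊤ D).zero_mem
      | tmul x y =>
          rw [Algebra.TensorProduct.tmul_mul_tmul]
          exact Submodule.subset_span ⟨x * a, trivial, y * b, hBD y b hb, rfl⟩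
      | add u₁ u₂ h₁ h₂ =>
          rw [add_mul]; exact (tsub K H ⊤ D).add_mem h₁ h₂
  | zero => simpa using (tsub K H ⊤ D).zero_mem
  | add w₁ w₂ _ _ h₁ h₂ =>
      rw [mul_add]; exact (tsub K H ⊤ D).add_mem h₁ h₂
  | smul k w _ h =>
      rw [mul_smul_comm]; exact (tsub K H ⊤ D).smul_mem k h

/-- Symmetric version: multiplying into `B ⊗ H` stays in `D ⊗ H`. -/
lemma mul_mem_tsub_left (B D : Submodule K H)
    (hBD : ∀ (y b : H), b ∈ B → y * b ∈ D)
    (u : H ⊗[K] H) (w : H ⊗[K] H) (hw : w ∈ tsub K H B ⊤) :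
    u * w ∈ tsub K H D ⊤ := by
  induction hw using Submodule.span_induction with
  | mem z hz =>
      obtain ⟨a, ha, b, -, rfl⟩ := hz
      induction u using TensorProduct.induction_on with
      | zero => simpa using (tsub K H D ⊤).zero_mem
      | tmul x y =>
          rw [Algebra.TensorProduct.tmul_mul_tmul]
          exact Submodule.subset_span ⟨x * a, hBD x a ha, y * b, trivial, rfl⟩
      | add u₁ u₂ h₁ h₂ =>
          rw [add_mul]; exact (tsub K H D ⊤).add_mem h₁ h₂
  | zero => simpa using (tsub K H D ⊤).zero_mem
  | add w₁ w₂ _ _ h₁ h₂ =>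
      rw [mul_add]; exact (tsub K H D ⊤).add_mem h₁ h₂
  | smul k w _ h =>
      rw [mul_smul_comm]; exact (tsub K H D ⊤).smul_mem k h

/-- If `C` is a unital subalgebra and left coideal of `H`
    (`Δ(C) ⊆ H ⊗ C`), then `Ψ(C) = H·C⁺` is a left ideal and a two-sided coideal of `H`
    (`Δ(Ψ(C)) ⊆ H ⊗ Ψ(C) + Ψ(C) ⊗ H` and `ε(Ψ(C)) = 0`). -/
theorem Psi_leftIdeal_coideal (C : Subalgebra K H)
    (hC : ∀ c ∈ C, Coalgebra.comul (R := K) c ∈ tsub K H ⊤ C.toSubmodule) :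
    (∀ h : H, ∀ x ∈ Psi K H C.toSubmodule, h * x ∈ Psi K H C.toSubmodule) ∧
    (∀ x ∈ Psi K H C.toSubmodule,
      Coalgebra.comul (R := K) x ∈
        tsub K H ⊤ (Psi K H C.toSubmodule) ⊔ tsub K H (Psi K H C.toSubmodule) ⊤ ∧
      Coalgebra.counit (R := K) x = 0) := by
  set Ψ := Psi K H C.toSubmodule with hΨ
  -- `C⁺` as a submodule
  set Cp : Submodule K H :=
    C.toSubmodule ⊓ LinearMap.ker (Coalgebra.counit (R := K) (A := H)) with hCp
  have hCpΨ : ∀ (y b : H), b ∈ Cp → y * b ∈ Ψ := fun y b hb =>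
    Submodule.subset_span ⟨y, b, hb.1, hb.2, rfl⟩
  -- left ideal property
  have hleft : ∀ h : H, ∀ x ∈ Ψ, h * x ∈ Ψ := by
    intro h x hx
    induction hx using Submodule.span_induction with
    | mem z hz =>
        obtain ⟨g, c, hc, hε, rfl⟩ := hz
        rw [← mul_assoc]
        exact Submodule.subset_span ⟨h * g, c, hc, hε, rfl⟩
    | zero => simpa using Ψ.zero_mem
    | add a b _ _ ha hb => rw [mul_add]; exact Ψ.add_mem ha hb
    | smul k a _ ha => rw [mul_smul_comm]; exact Ψ.smul_mem k ha
  refine ⟨hleft, ?_⟩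
  -- counit vanishes on Ψ
  have hcounit : ∀ x ∈ Ψ, Coalgebra.counit (R := K) x = 0 := by
    intro x hx
    induction hx using Submodule.span_induction with
    | mem z hz =>
        obtain ⟨g, c, hc, hε, rfl⟩ := hz
        rw [Bialgebra.counit_mul, hε, mul_zero]
    | zero => simp
    | add a b _ _ ha hb => rw [map_add, ha, hb, add_zero]
    | smul k a _ ha => rw [map_smul, ha, smul_zero]
  -- the "projection away from the counit" map
  set f : H →ₗ[K] H :=
    LinearMap.id - (Algebra.linearMap K H).comp (Coalgebra.counit (R := K)) with hf
  -- for c ∈ C⁺:  comul c = (lTensor f)(comul c) + c ⊗ 1, with the first term in H ⊗ C⁺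
  have key : ∀ c ∈ C, Coalgebra.counit (R := K) c = 0 →
      Coalgebra.comul (R := K) c - c ⊗ₜ[K] (1 : H) ∈ tsub K H ⊤ Cp := by
    intro c hc hε
    have h1 : ∀ z ∈ tsub K H ⊤ C.toSubmodule, LinearMap.lTensor H f z ∈ tsub K H ⊤ Cp := by
      intro z hz
      induction hz using Submodule.span_induction with
      | mem z hz =>
          obtain ⟨a, -, b, hb, rfl⟩ := hz
          rw [LinearMap.lTensor_tmul]
          refine Submodule.subset_span ⟨a, trivial, f b, ⟨?_, ?_⟩, rfl⟩
          · have : f b = b - algebraMap K H (Coalgebra.counit (R := K) b) := by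
              simp [hf, Algebra.linearMap_apply]
            rw [this]
            exact C.toSubmodule.sub_mem hb (C.algebraMap_mem _)
          · simp [hf, Algebra.linearMap_apply, LinearMap.mem_ker]
      | zero => simpa using (tsub K H ⊤ Cp).zero_mem
      | add a b _ _ ha hb => rw [map_add]; exact (tsub K H ⊤ Cp).add_mem ha hb
      | smul k a _ ha => rw [map_smul]; exact (tsub K H ⊤ Cp).smul_mem k ha
    have h2 : LinearMap.lTensor H f (Coalgebra.comul (R := K) c)
        = Coalgebra.comul (R := K) c - c ⊗ₜ[K] (1 : H) := by
      have hsplit : LinearMap.lTensor H f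
          = LinearMap.id - (LinearMap.lTensor H (Algebra.linearMap K H)).comp
              (LinearMap.lTensor H (Coalgebra.counit (R := K))) := by
        rw [hf, LinearMap.lTensor_sub, LinearMap.lTensor_id, LinearMap.lTensor_comp]
      rw [hsplit]
      simp only [LinearMap.sub_apply, LinearMap.id_apply, LinearMap.comp_apply]
      rw [Coalgebra.lTensor_counit_comul]
      simp [Algebra.linearMap_apply]
    rw [← h2]; exact h1 _ (hC c hc)
  intro x hx
  refine ⟨?_, hcounit x hx⟩
  -- comultiplication condition
  set T : Submodule K (H ⊗[K] H) := tsub K H ⊤ Ψ ⊔ tsub K H Ψ ⊤ with hT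
  induction hx using Submodule.span_induction with
  | mem z hz =>
      obtain ⟨g, c, hc, hε, rfl⟩ := hz
      rw [Bialgebra.comul_mul]
      have hdecomp : Coalgebra.comul (R := K) c
          = (Coalgebra.comul (R := K) c - c ⊗ₜ[K] (1 : H)) + c ⊗ₜ[K] (1 : H) := by abel
      rw [hdecomp, mul_add]
      refine T.add_mem ?_ ?_
      · exact Submodule.mem_sup_left <|
          mul_mem_tsub_right K H Cp Ψ hCpΨ _ _ (key c hc hε)
      · refine Submodule.mem_sup_right <|
          mul_mem_tsub_left K H Cp Ψ hCpΨ _ _ ?_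
        exact Submodule.subset_span ⟨c, ⟨hc, hε⟩, 1, trivial, rfl⟩
  | zero => simpa using T.zero_mem
  | add a b _ _ ha hb => rw [map_add]; exact T.add_mem ha hb
  | smul k a _ ha => rw [map_smul]; exact T.smul_mem k ha

end GQDP
end

section
/- Let H be a Hopf algebra over a field and I a left ideal and two-sided coideal of H. Define Φ(I) = H^{co I} := { y ∈ H | Δ(y) − y⊗1 ∈ H ⊗ I }. Then Φ(I) is a unital subalgebra and left coideal of H. -/
/- STATEMENT 2: if `I` is a left ideal and two-sided coideal of a Hopf algebra `H` over a field,
   then `Φ(I) = H^{co I} = { y | Δ(y) − y⊗1 ∈ H ⊗ I }` is a unital subalgebra and left coideal. -/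

open scoped TensorProduct

namespace GQDP

variable (K : Type*) [Field K] (H : Type*) [Ring H] [HopfAlgebra K H]

/-- `Φ(I) := H^{co I} = { y ∈ H | Δ(y) − y ⊗ 1 ∈ H ⊗ I }`. -/
noncomputable def Phi (I : Submodule K H) : Submodule K H :=
  Submodule.comap
    ((Coalgebra.comul : H →ₗ[K] H ⊗[K] H) - (TensorProduct.mk K H H).flip 1)
    (tsub K H ⊤ I)

/-- For any linear map `φ` out of `H`, the kernel of `id ⊗ φ` is contained in
    `H ⊗ (ker φ)` (as a span of pure tensors), since `H` is flat over the field `K`. -/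
lemma ker_lTensor_le {M : Type*} [AddCommGroup M] [Module K M] (φ : H →ₗ[K] M) :
    LinearMap.ker (φ.lTensor H) ≤ tsub K H ⊤ (LinearMap.ker φ) := by
  intro z hz
  have hex : Function.Exact ((LinearMap.ker φ).subtype.lTensor H) (φ.lTensor H) :=
    Module.Flat.lTensor_exact H (LinearMap.exact_subtype_ker_map φ)
  obtain ⟨w, hw⟩ := (hex z).mp (LinearMap.mem_ker.mp hz)
  subst hw
  clear hz
  induction w using TensorProduct.induction_on with
  | zero => simp
  | tmul h a =>
      rw [LinearMap.lTensor_tmul]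
      exact Submodule.subset_span ⟨h, trivial, a, a.2, rfl⟩
  | add x y hx hy => rw [map_add]; exact add_mem hx hy

lemma le_ker_lTensor {M : Type*} [AddCommGroup M] [Module K M] (φ : H →ₗ[K] M) :
    tsub K H ⊤ (LinearMap.ker φ) ≤ LinearMap.ker (φ.lTensor H) := by
  rw [tsub, Submodule.span_le]
  rintro _ ⟨a, -, b, hb, rfl⟩
  simp [LinearMap.mem_ker.mp hb]

lemma tsub_eq_ker (I : Submodule K H) :
    tsub K H ⊤ I = LinearMap.ker (I.mkQ.lTensor H) := by
  refine le_antisymm ?_ ?_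
  · have := le_ker_lTensor K H I.mkQ
    rwa [I.ker_mkQ] at this
  · have := ker_lTensor_le K H I.mkQ
    rwa [I.ker_mkQ] at this

/-- If `I` is a left ideal and two-sided coideal of `H`, then
    `Φ(I) = H^{co I}` is a unital subalgebra and a left coideal of `H`. -/
theorem Phi_subalgebra_leftCoideal (I : Submodule K H)
    (hIdeal : ∀ h : H, ∀ x ∈ I, h * x ∈ I)
    (hcoideal : ∀ x ∈ I, Coalgebra.comul (R := K) x ∈ tsub K H ⊤ I ⊔ tsub K H I ⊤)
    (hcounit : ∀ x ∈ I, Coalgebra.counit (R := K) x = 0) :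
    (1 : H) ∈ Phi K H I ∧
    (∀ x ∈ Phi K H I, ∀ y ∈ Phi K H I, x * y ∈ Phi K H I) ∧
    (∀ x ∈ Phi K H I, Coalgebra.comul (R := K) x ∈ tsub K H ⊤ (Phi K H I)) := by
  set Δ : H →ₗ[K] H ⊗[K] H := Coalgebra.comul with hΔ
  set g : H →ₗ[K] H ⊗[K] H := Δ - (TensorProduct.mk K H H).flip 1 with hg
  have hPhi : ∀ y : H, y ∈ Phi K H I ↔ Δ y - y ⊗ₜ[K] 1 ∈ tsub K H ⊤ I := fun y => Iff.rfl
  -- left-ideal properties of tsub ⊤ I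
  have hmul_left : ∀ z : H ⊗[K] H, ∀ w ∈ tsub K H ⊤ I, z * w ∈ tsub K H ⊤ I := by
    intro z w hw
    induction hw using Submodule.span_induction with
    | mem x hx =>
        obtain ⟨a, -, b, hb, rfl⟩ := hx
        induction z using TensorProduct.induction_on with
        | zero => simpa using (tsub K H ⊤ I).zero_mem
        | tmul p q =>
            rw [Algebra.TensorProduct.tmul_mul_tmul]
            exact Submodule.subset_span ⟨p * a, trivial, q * b, hIdeal q b hb, rfl⟩
        | add x y hx hy => rw [add_mul]; exact add_mem hx hy
    | zero => simpa using (tsub K H ⊤ I).zero_mem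
    | add x y _ _ hx hy => rw [mul_add]; exact add_mem hx hy
    | smul c x _ hx => rw [mul_smul_comm]; exact Submodule.smul_mem _ c hx
  have hmul_right : ∀ w ∈ tsub K H ⊤ I, ∀ y : H, w * (y ⊗ₜ[K] (1:H)) ∈ tsub K H ⊤ I := by
    intro w hw y
    induction hw using Submodule.span_induction with
    | mem x hx =>
        obtain ⟨a, -, b, hb, rfl⟩ := hx
        rw [Algebra.TensorProduct.tmul_mul_tmul, mul_one]
        exact Submodule.subset_span ⟨a * y, trivial, b, hb, rfl⟩
    | zero => simpa using (tsub K H ⊤ I).zero_mem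
    | add x y _ _ hx hy => rw [add_mul]; exact add_mem hx hy
    | smul c x _ hx => rw [smul_mul_assoc]; exact Submodule.smul_mem _ c hx
  refine ⟨?_, ?_, ?_⟩
  · -- 1 ∈ Phi
    rw [hPhi]
    have h1 : Δ (1 : H) = 1 ⊗ₜ[K] 1 := by
      rw [hΔ, Bialgebra.comul_one, Algebra.TensorProduct.one_def]
    rw [h1]
    simpa using (tsub K H ⊤ I).zero_mem
  · -- multiplicative closure
    intro x hx y hy
    rw [hPhi] at hx hy ⊢
    have hΔmul : Δ (x * y) = Δ x * Δ y := Bialgebra.comul_mul x y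
    have key : Δ (x * y) - (x * y) ⊗ₜ[K] 1 =
        (x ⊗ₜ[K] 1) * (Δ y - y ⊗ₜ[K] 1) + (Δ x - x ⊗ₜ[K] 1) * (y ⊗ₜ[K] 1)
          + (Δ x - x ⊗ₜ[K] 1) * (Δ y - y ⊗ₜ[K] 1) := by
      have h2 : (x * y) ⊗ₜ[K] (1:H) = (x ⊗ₜ[K] (1:H)) * (y ⊗ₜ[K] 1) := by
        rw [Algebra.TensorProduct.tmul_mul_tmul, mul_one]
      rw [hΔmul, h2]
      noncomm_ring
    rw [key]
    exact add_mem (add_mem (hmul_left _ _ hy) (hmul_right _ hx y))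
      (hmul_left _ _ hy)
  · -- left coideal
    intro y hy
    set π : H →ₗ[K] H ⧸ I := I.mkQ
    set f : H →ₗ[K] H ⊗[K] (H ⧸ I) := (π.lTensor H) ∘ₗ g with hf
    have hPhiKer : Phi K H I = LinearMap.ker f := by
      unfold Phi
      rw [tsub_eq_ker, hf, LinearMap.ker_comp]
    -- it suffices to show (id ⊗ f)(Δ y) = 0
    have hker : Δ y ∈ LinearMap.ker (f.lTensor H) := by
      rw [LinearMap.mem_ker, hf, LinearMap.lTensor_comp, LinearMap.comp_apply]
      have hgl : (g.lTensor H) (Δ y) =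
          (Δ.lTensor H) (Δ y) - (((TensorProduct.mk K H H).flip 1).lTensor H) (Δ y) := by
        rw [hg, LinearMap.lTensor_sub, LinearMap.sub_apply]
      rw [hgl, map_sub]
      -- coassociativity
      have hco : (Δ.lTensor H) (Δ y) =
          (TensorProduct.assoc K H H H) ((Δ.rTensor H) (Δ y)) := by
        have h3 := LinearMap.congr_fun (Coalgebra.coassoc (R := K) (A := H)) y
        simp only [LinearMap.coe_comp, Function.comp_apply, LinearEquiv.coe_coe] at h3
        exact h3.symm
      rw [hco]
      -- Δ y = y ⊗ 1 + u with u ∈ tsub ⊤ I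
      obtain ⟨u, hu_mem, hu⟩ : ∃ u, u ∈ tsub K H ⊤ I ∧ Δ y - y ⊗ₜ[K] 1 = u :=
        ⟨_, (hPhi y).mp hy, rfl⟩
      have e2 : (Δ.rTensor H) (Δ y) = (Δ.rTensor H) (y ⊗ₜ[K] 1) + (Δ.rTensor H) u := by
        rw [← map_add]
        congr 1
        rw [← hu]
        abel
      -- key pointwise lemma 1
      have key1 : ∀ w : H ⊗[K] H,
          ((π.lTensor H).lTensor H) ((TensorProduct.assoc K H H H) (w ⊗ₜ[K] 1))
            = ((π.lTensor H).lTensor H)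
                ((((TensorProduct.mk K H H).flip 1).lTensor H) w) := by
        intro w
        induction w using TensorProduct.induction_on with
        | zero =>
            rw [TensorProduct.zero_tmul, LinearEquiv.map_zero, map_zero, map_zero, map_zero]
        | tmul p q =>
            simp only [TensorProduct.assoc_tmul, LinearMap.lTensor_tmul,
              LinearMap.flip_apply, TensorProduct.mk_apply]
        | add s t hs ht =>
            rw [TensorProduct.add_tmul, LinearEquiv.map_add, map_add, map_add, map_add, hs, ht]
      -- u part vanishes
      have key2 :
          ((π.lTensor H).lTensor H) ((TensorProduct.assoc K H H H) ((Δ.rTensor H) u)) = 0 := by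
        clear e2 hu
        induction hu_mem using Submodule.span_induction with
        | mem x hx =>
            obtain ⟨a, -, b, hb, rfl⟩ := hx
            rw [LinearMap.rTensor_tmul]
            have hb0 : π b = 0 := by simpa [π] using (Submodule.Quotient.mk_eq_zero I).mpr hb
            induction (Δ a) using TensorProduct.induction_on with
            | zero => rw [TensorProduct.zero_tmul, LinearEquiv.map_zero, map_zero]
            | tmul p q =>
                simp only [TensorProduct.assoc_tmul, LinearMap.lTensor_tmul, hb0,
                  TensorProduct.tmul_zero]
            | add s t hs ht =>
                rw [TensorProduct.add_tmul, LinearEquiv.map_add, map_add, hs, ht, add_zero]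
        | zero => rw [map_zero, LinearEquiv.map_zero, map_zero]
        | add x y _ _ hx hy => rw [map_add, LinearEquiv.map_add, map_add, hx, hy, add_zero]
        | smul c x _ hx => rw [map_smul, LinearEquiv.map_smul, map_smul, hx, smul_zero]
      rw [e2, LinearMap.rTensor_tmul, map_add, map_add, key2, add_zero, key1, sub_self]
    have h4 := ker_lTensor_le K H f hker
    rwa [← hPhiKer] at h4


end GQDP
end

section
/- Let H be a Hopf algebra. The pair of maps Ψ(C) = H·C⁺ (from left coideal subalgebras to left ideal two-sided coideals) and Φ(I) = H^{co I} (in the reverse direction) forms a simple Galois correspondence: both are inclusion-preserving, Φ(Ψ(C)) ⊇ C, and Ψ(Φ(I)) ⊆ I; consequently Φ∘Ψ∘Φ = Φ and Ψ∘Φ∘Ψ = Ψ. -/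
/- STATEMENT 3: the pair `Ψ(C) = H·C⁺`, `Φ(I) = H^{co I}` forms a simple Galois correspondence
   between left coideal subalgebras and left ideal two-sided coideals of a Hopf algebra `H`:
   both maps preserve inclusions, `Φ(Ψ(C)) ⊇ C`, `Ψ(Φ(I)) ⊆ I`, and consequently
   `Φ∘Ψ∘Φ = Φ` and `Ψ∘Φ∘Ψ = Ψ`. -/

open scoped TensorProduct

namespace GQDP

variable (K : Type*) [Field K] (H : Type*) [Ring H] [HopfAlgebra K H]

lemma Psi_mono {C₁ C₂ : Submodule K H} (h : C₁ ≤ C₂) : Psi K H C₁ ≤ Psi K H C₂ :=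
  Submodule.span_mono fun x ⟨a, c, hc, hε, hx⟩ => ⟨a, c, h hc, hε, hx⟩

lemma tsub_mono {I₁ I₂ : Submodule K H} (h : I₁ ≤ I₂) : tsub K H ⊤ I₁ ≤ tsub K H ⊤ I₂ :=
  Submodule.span_mono fun z ⟨a, ha, b, hb, hz⟩ => ⟨a, ha, b, h hb, hz⟩

lemma Phi_mono {I₁ I₂ : Submodule K H} (h : I₁ ≤ I₂) : Phi K H I₁ ≤ Phi K H I₂ :=
  Submodule.comap_mono (tsub_mono K H h)

/-- `tsub ⊤ S` is the range of `H ⊗ S → H ⊗ H`. -/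
lemma tsub_eq_range (S : Submodule K H) :
    tsub K H ⊤ S = LinearMap.range (LinearMap.lTensor H S.subtype) := by
  apply le_antisymm
  · rw [tsub, Submodule.span_le]
    rintro z ⟨a, -, b, hb, rfl⟩
    exact ⟨a ⊗ₜ[K] ⟨b, hb⟩, rfl⟩
  · rintro z ⟨u, rfl⟩
    induction u with
    | zero => simp
    | tmul a b =>
        exact Submodule.subset_span ⟨a, trivial, b, b.2, rfl⟩
    | add u v hu hv => rw [map_add]; exact add_mem hu hv

/-- `Ψ C` is a left ideal. -/
lemma Psi_leftIdeal (C : Submodule K H) (h : H) {x : H} (hx : x ∈ Psi K H C) :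
    h * x ∈ Psi K H C := by
  induction hx using Submodule.span_induction with
  | mem x hx =>
      obtain ⟨a, c, hc, hε, rfl⟩ := hx
      rw [← mul_assoc]
      exact Submodule.subset_span ⟨h * a, c, hc, hε, rfl⟩
  | zero => rw [mul_zero]; exact zero_mem _
  | add x y _ _ hx hy => rw [mul_add]; exact add_mem hx hy
  | smul r x _ hx => rw [mul_smul_comm]; exact Submodule.smul_mem _ _ hx

/-- If `C` is a unital left coideal, then `C ≤ Φ(Ψ C)`. -/
lemma le_Phi_Psi (C : Submodule K H) (hC1 : (1 : H) ∈ C)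
    (hCcoideal : ∀ c ∈ C, Coalgebra.comul (R := K) c ∈ tsub K H ⊤ C) :
    C ≤ Phi K H (Psi K H C) := by
  intro y hy
  set g : H →ₗ[K] H :=
    LinearMap.id - (Algebra.linearMap K H ∘ₗ Coalgebra.counit) with hg
  have key : LinearMap.lTensor H g (Coalgebra.comul (R := K) y)
      = Coalgebra.comul (R := K) y - y ⊗ₜ[K] 1 := by
    rw [hg, LinearMap.lTensor_sub, LinearMap.sub_apply, LinearMap.lTensor_id,
      LinearMap.id_apply, LinearMap.lTensor_comp, LinearMap.comp_apply,
      Coalgebra.lTensor_counit_comul]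
    simp
  have hmaps : ∀ z ∈ tsub K H ⊤ C, LinearMap.lTensor H g z ∈ tsub K H ⊤ (Psi K H C) := by
    intro z hz
    induction hz using Submodule.span_induction with
    | mem z hz =>
        obtain ⟨a, -, c, hc, rfl⟩ := hz
        rw [LinearMap.lTensor_tmul]
        refine Submodule.subset_span ⟨a, trivial, g c, ?_, rfl⟩
        refine Submodule.subset_span ⟨1, g c, ?_, ?_, (one_mul _).symm⟩
        · simpa [hg, Algebra.algebraMap_eq_smul_one] using
            sub_mem hc (Submodule.smul_mem _ _ hC1)
        · simp [hg, Algebra.algebraMap_eq_smul_one]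
    | zero => simp
    | add x y _ _ hx hy => rw [map_add]; exact add_mem hx hy
    | smul r x _ hx => rw [map_smul]; exact Submodule.smul_mem _ _ hx
  show _ ∈ tsub K H ⊤ (Psi K H C)
  simpa [key] using hmaps _ (hCcoideal y hy)

/-- If `I` is a left ideal then `Ψ(Φ I) ≤ I`. -/
lemma Psi_Phi_le (I : Submodule K H) (hIdeal : ∀ h : H, ∀ x ∈ I, h * x ∈ I) :
    Psi K H (Phi K H I) ≤ I := by
  rw [Psi, Submodule.span_le]
  rintro x ⟨h, c, hc, hε, rfl⟩
  set e : H ⊗[K] H →ₗ[K] H :=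
    (TensorProduct.lid K H).toLinearMap ∘ₗ
      LinearMap.rTensor H (Coalgebra.counit (R := K)) with he
  have hmaps : ∀ z ∈ tsub K H ⊤ I, e z ∈ I := by
    intro z hz
    induction hz using Submodule.span_induction with
    | mem z hz =>
        obtain ⟨a, -, b, hb, rfl⟩ := hz
        simpa [he] using Submodule.smul_mem _ _ hb
    | zero => simp
    | add x y _ _ hx hy => rw [map_add]; exact add_mem hx hy
    | smul r x _ hx => rw [map_smul]; exact Submodule.smul_mem _ _ hx
  have hcI : c ∈ I := by
    have hc' : ((Coalgebra.comul : H →ₗ[K] H ⊗[K] H)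
        - (TensorProduct.mk K H H).flip 1) c ∈ tsub K H ⊤ I := hc
    have h2 : e (((Coalgebra.comul : H →ₗ[K] H ⊗[K] H)
        - (TensorProduct.mk K H H).flip 1) c) = c := by
      rw [he, LinearMap.comp_apply, LinearMap.sub_apply, map_sub,
        Coalgebra.rTensor_counit_comul, show ((TensorProduct.mk K H H).flip 1) c
          = c ⊗ₜ[K] (1 : H) from rfl, LinearMap.rTensor_tmul, hε]
      simp
    have := hmaps _ hc'
    rwa [h2] at this
  exact hIdeal h c hcI

lemma one_mem_Phi (I : Submodule K H) : (1 : H) ∈ Phi K H I := by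
  show _ ∈ tsub K H ⊤ I
  rw [LinearMap.sub_apply, Bialgebra.comul_one]
  simp only [TensorProduct.mk_apply, LinearMap.flip_apply,
    Algebra.TensorProduct.one_def, sub_self]
  exact zero_mem _

/-- `Φ I` is a left coideal. -/
lemma Phi_coideal (I : Submodule K H) :
    ∀ y ∈ Phi K H I, Coalgebra.comul (R := K) y ∈ tsub K H ⊤ (Phi K H I) := by
  intro y hy
  set D : H →ₗ[K] H ⊗[K] H :=
    (Coalgebra.comul : H →ₗ[K] H ⊗[K] H) - (TensorProduct.mk K H H).flip 1 with hD
  set W : Submodule K (H ⊗[K] H) := tsub K H ⊤ I with hW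
  set f : H →ₗ[K] (H ⊗[K] H) ⧸ W := W.mkQ ∘ₗ D with hf
  have hker : LinearMap.ker f = Phi K H I := by
    rw [hf, LinearMap.ker_comp, Submodule.ker_mkQ]; rfl
  -- exactness: ker (1 ⊗ f) = range (1 ⊗ (ker f).subtype)
  have hexact : Function.Exact (LinearMap.ker f).subtype f :=
    LinearMap.exact_iff.mpr (by rw [Submodule.range_subtype])
  have hex2 := Module.Flat.lTensor_exact (M := H) hexact
  rw [LinearMap.exact_iff] at hex2
  -- reduce to showing `lTensor H f (Δ y) = 0`
  rw [tsub_eq_range, ← hker, ← hex2, LinearMap.mem_ker, hf,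
    LinearMap.lTensor_comp, LinearMap.comp_apply]
  -- compute `lTensor H D (Δ y)`
  have hw : D y ∈ W := hy
  have assoc_one : ∀ z : H ⊗[K] H,
      (TensorProduct.assoc K H H H) (z ⊗ₜ[K] (1 : H))
        = LinearMap.lTensor H ((TensorProduct.mk K H H).flip 1) z := by
    intro z
    induction z with
    | zero => rw [TensorProduct.zero_tmul, LinearEquiv.map_zero, map_zero]
    | tmul a b =>
        simp only [TensorProduct.assoc_tmul, LinearMap.lTensor_tmul,
          LinearMap.flip_apply, TensorProduct.mk_apply]
    | add u v hu hv => rw [TensorProduct.add_tmul, LinearEquiv.map_add, map_add, hu, hv]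
  have key : LinearMap.lTensor H D (Coalgebra.comul (R := K) y)
      = (TensorProduct.assoc K H H H)
          (LinearMap.rTensor H (Coalgebra.comul (R := K)) (D y)) := by
    have h1 : D y = Coalgebra.comul (R := K) y - y ⊗ₜ[K] 1 := by
      rw [hD, LinearMap.sub_apply]; rfl
    have asub : ∀ u v : (H ⊗[K] H) ⊗[K] H, (TensorProduct.assoc K H H H) (u - v)
        = (TensorProduct.assoc K H H H) u - (TensorProduct.assoc K H H H) v :=
      fun u v => (TensorProduct.assoc K H H H).toLinearMap.map_sub u v
    rw [h1, map_sub, asub, LinearMap.rTensor_tmul,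
      Coalgebra.coassoc_apply, assoc_one, hD, LinearMap.lTensor_sub,
      LinearMap.sub_apply]
  rw [key]
  -- show the image of `W` under `assoc ∘ rTensor Δ` dies in the quotient
  have hmem : ∀ w ∈ W, (TensorProduct.assoc K H H H)
      (LinearMap.rTensor H (Coalgebra.comul (R := K)) w)
        ∈ LinearMap.range (LinearMap.lTensor H W.subtype) := by
    intro w hwmem
    induction hwmem using Submodule.span_induction with
    | mem w hwm =>
        obtain ⟨a, -, i, hi, rfl⟩ := hwm
        rw [LinearMap.rTensor_tmul]
        have assoc_i : ∀ u : H ⊗[K] H,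
            (TensorProduct.assoc K H H H) (u ⊗ₜ[K] i)
              = LinearMap.lTensor H ((TensorProduct.mk K H H).flip i) u := by
          intro u
          induction u with
          | zero => rw [TensorProduct.zero_tmul, LinearEquiv.map_zero, map_zero]
          | tmul a b =>
              simp only [TensorProduct.assoc_tmul, LinearMap.lTensor_tmul,
                LinearMap.flip_apply, TensorProduct.mk_apply]
          | add u v hu hv => rw [TensorProduct.add_tmul, LinearEquiv.map_add, map_add, hu, hv]
        rw [assoc_i]
        have : ((TensorProduct.mk K H H).flip i : H →ₗ[K] H ⊗[K] H)
            = W.subtype ∘ₗ LinearMap.codRestrict W ((TensorProduct.mk K H H).flip i)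
                (fun b => Submodule.subset_span ⟨b, trivial, i, hi, rfl⟩) := by
          ext b; rfl
        rw [this, LinearMap.lTensor_comp]
        exact ⟨_, rfl⟩
    | zero => rw [map_zero, LinearEquiv.map_zero]; exact zero_mem _
    | add x y _ _ hx hy => rw [map_add, LinearEquiv.map_add]; exact add_mem hx hy
    | smul r x _ hx =>
        rw [map_smul, LinearEquiv.map_smul]; exact Submodule.smul_mem _ _ hx
  rw [← LinearMap.mem_ker, lTensor_mkQ]
  exact hmem _ hw

/-- `(Ψ, Φ)` is a simple Galois correspondence. -/
theorem Psi_Phi_galois_correspondence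
    (C I : Submodule K H)
    (hC1 : (1 : H) ∈ C) (hCmul : ∀ x ∈ C, ∀ y ∈ C, x * y ∈ C)
    (hCcoideal : ∀ c ∈ C, Coalgebra.comul (R := K) c ∈ tsub K H ⊤ C)
    (hIdeal : ∀ h : H, ∀ x ∈ I, h * x ∈ I)
    (hIcoideal : ∀ x ∈ I, Coalgebra.comul (R := K) x ∈ tsub K H ⊤ I ⊔ tsub K H I ⊤)
    (hIcounit : ∀ x ∈ I, Coalgebra.counit (R := K) x = 0) :
    (∀ C₁ C₂ : Submodule K H, C₁ ≤ C₂ → Psi K H C₁ ≤ Psi K H C₂) ∧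
    (∀ I₁ I₂ : Submodule K H, I₁ ≤ I₂ → Phi K H I₁ ≤ Phi K H I₂) ∧
    C ≤ Phi K H (Psi K H C) ∧
    Psi K H (Phi K H I) ≤ I ∧
    Phi K H (Psi K H (Phi K H I)) = Phi K H I ∧
    Psi K H (Phi K H (Psi K H C)) = Psi K H C := by
  refine ⟨fun _ _ h => Psi_mono K H h, fun _ _ h => Phi_mono K H h,
    le_Phi_Psi K H C hC1 hCcoideal, Psi_Phi_le K H I hIdeal, ?_, ?_⟩
  · exact le_antisymm (Phi_mono K H (Psi_Phi_le K H I hIdeal))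
      (le_Phi_Psi K H (Phi K H I) (one_mem_Phi K H I) (Phi_coideal K H I))
  · exact le_antisymm
      (Psi_Phi_le K H (Psi K H C) (fun h x hx => Psi_leftIdeal K H C h hx))
      (Psi_mono K H (le_Phi_Psi K H C hC1 hCcoideal))

end GQDP
end

section
/- Let H be a Hopf algebra over a commutative ring and for a finite subset Φ ⊆ {1,…,n} define δ_Φ := Σ_{Σ'⊆Φ} (−1)^{|Φ|−|Σ'|} Δ_{Σ'}, where Δ_Σ inserts the iterated coproduct into the tensor positions indexed by Σ and 1's elsewhere, and δ_∅ := ε. Then for all a, b ∈ H and any finite Φ, δ_Φ(a·b) = Σ_{Λ∪Y=Φ} δ_Λ(a)·δ_Y(b). -/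
/-!
`Δ_Σ` is an algebra map (it is built from the coproduct, the counit and the unit), and by
inclusion–exclusion `Δ_Σ = Σ_{Ψ⊆Σ} δ_Ψ`. Multiplying out `Δ_Σ(a)·Δ_Σ(b)` and grouping the terms
`δ_Λ(a)·δ_Y(b)` by `Λ ∪ Y` writes `Δ_Σ(a·b)` as `Σ_{Ψ⊆Σ} G(Ψ)` with
`G(Ψ) = Σ_{Λ∪Y=Ψ} δ_Λ(a)·δ_Y(b)`; Möbius inversion on the Boolean lattice then gives
`δ_Φ(a·b) = G(Φ)`.
-/

open scoped TensorProduct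
open PiTensorProduct

namespace Finset

variable {α : Type*} [DecidableEq α] {s t : Finset α}

theorem sum_Icc_neg_one_pow_card_sub_card_left (h : s ⊆ t) :
    ∑ u ∈ Icc s t, (-1 : ℤ) ^ (#u - #s) = if s = t then 1 else 0 := by
  rw [sum_nbij' (· \ s) (s ∪ ·) (t := (t \ s).powerset) (g := fun v => (-1 : ℤ) ^ #v),
    sum_powerset_neg_one_pow_card]
  · exact if_congr (sdiff_eq_empty_iff_subset.trans ⟨h.antisymm, Eq.ge⟩) rfl rfl
  all_goals intro u hu; simp only [mem_Icc, mem_powerset] at hu ⊢; grind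

theorem sum_Icc_neg_one_pow_card_sub_card_right (h : s ⊆ t) :
    ∑ u ∈ Icc s t, (-1 : ℤ) ^ (#t - #u) = if s = t then 1 else 0 := by
  rw [sum_nbij' (t \ ·) (t \ ·) (t := (t \ s).powerset) (g := fun v => (-1 : ℤ) ^ #v),
    sum_powerset_neg_one_pow_card]
  · exact if_congr (sdiff_eq_empty_iff_subset.trans ⟨h.antisymm, Eq.ge⟩) rfl rfl
  all_goals intro u hu; simp only [mem_Icc, mem_powerset] at hu ⊢; grind

theorem sum_powerset_sum_powerset_comm {M : Type*} [AddCommMonoid M] (s : Finset α)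
    (f : Finset α → Finset α → M) :
    ∑ t ∈ s.powerset, ∑ u ∈ t.powerset, f t u = ∑ u ∈ s.powerset, ∑ t ∈ Icc u s, f t u :=
  sum_comm' fun t u => by simp only [mem_powerset, mem_Icc]; grind

theorem sum_powerset_mul_sum_powerset {A : Type*} [NonUnitalNonAssocSemiring A] (s : Finset α)
    (f g : Finset α → A) :
    (∑ t ∈ s.powerset, f t) * (∑ u ∈ s.powerset, g u) =
      ∑ v ∈ s.powerset, ∑ p ∈ (v.powerset ×ˢ v.powerset).filter (fun p => p.1 ∪ p.2 = v),
        f p.1 * g p.2 := by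
  have union_mem : ∀ p ∈ s.powerset ×ˢ s.powerset, p.1 ∪ p.2 ∈ s.powerset := by
    simp only [mem_product, mem_powerset]
    exact fun p hp => union_subset hp.1 hp.2
  rw [sum_mul_sum, ← sum_product', ← sum_fiberwise_of_maps_to union_mem]
  refine sum_congr rfl fun v hv => sum_congr ?_ fun _ _ => rfl
  ext p
  simp only [mem_filter, mem_product, mem_powerset] at hv ⊢
  grind

variable {M : Type*} [AddCommGroup M]

theorem sum_powerset_neg_one_pow_smul_sum_powerset (s : Finset α) (f : Finset α → M) :
    ∑ t ∈ s.powerset, (-1 : ℤ) ^ (#s - #t) • ∑ u ∈ t.powerset, f u = f s := by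
  simp_rw [smul_sum]
  rw [sum_powerset_sum_powerset_comm]
  simp_rw [← sum_smul]
  rw [sum_congr rfl fun u hu => by rw [sum_Icc_neg_one_pow_card_sub_card_right (mem_powerset.1 hu)]]
  simp [ite_smul]

theorem sum_powerset_sum_powerset_neg_one_pow_smul (s : Finset α) (f : Finset α → M) :
    ∑ t ∈ s.powerset, ∑ u ∈ t.powerset, (-1 : ℤ) ^ (#t - #u) • f u = f s := by
  rw [sum_powerset_sum_powerset_comm]
  simp_rw [← sum_smul]
  rw [sum_congr rfl fun u hu => by rw [sum_Icc_neg_one_pow_card_sub_card_left (mem_powerset.1 hu)]]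
  simp [ite_smul]

end Finset

theorem LinearMap.lTensor_map_mul {R M A B : Type*} [CommSemiring R] [Semiring M] [Algebra R M]
    [Semiring A] [Algebra R A] [Semiring B] [Algebra R B] {g : A →ₗ[R] B}
    (hg : ∀ x y, g (x * y) = g x * g y) (x y : M ⊗[R] A) :
    g.lTensor M (x * y) = g.lTensor M x * g.lTensor M y :=
  map_mul_of_map_mul_tmul (by simp [hg]) x y

theorem PiTensorProduct.map_map_mul {ι R : Type*} [CommSemiring R] {A B : ι → Type*}
    [∀ i, Semiring (A i)] [∀ i, Algebra R (A i)] [∀ i, Semiring (B i)] [∀ i, Algebra R (B i)]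
    {f : ∀ i, A i →ₗ[R] B i} (hf : ∀ i x y, f i (x * y) = f i x * f i y) (x y : ⨂[R] i, A i) :
    map f (x * y) = map f x * map f y :=
  (map f).map_mul_iff.2 (by
    ext u v
    simp only [LinearMap.compMultilinearMap_apply, LinearMap.compr₂_apply, LinearMap.compl₂_apply,
      LinearMap.mul_apply_apply, LinearMap.comp_apply, tprod_mul_tprod, map_tprod]
    exact congrArg (tprod R) (funext fun i => hf i (u i) (v i))) x y

namespace GQDP

variable (R : Type*) [CommRing R] (H : Type*) [Ring H] [HopfAlgebra R H]

/-- The `n`-fold tensor power `H^{⊗n}`. -/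
abbrev TP (n : ℕ) := ⨂[R] (_ : Fin n), H

/-- The canonical map `H ⊗ H^{⊗n} → H^{⊗(n+1)}`. -/
noncomputable def step (n : ℕ) : (H ⊗[R] TP R H n) →ₗ[R] TP R H (n + 1) :=
  ((PiTensorProduct.reindex R (fun _ : Fin 1 ⊕ Fin n => H)
      (finSumFinEquiv.trans (finCongr (Nat.add_comm 1 n)))).toLinearMap
    ∘ₗ (PiTensorProduct.tmulEquiv (ι := Fin 1) (ι₂ := Fin n) R H).toLinearMap)
    ∘ₗ (LinearMap.rTensor (TP R H n)
      (PiTensorProduct.subsingletonEquiv (0 : Fin 1) : (⨂[R] (_ : Fin 1), H) ≃ₗ[R] H).symm.toLinearMap)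

/-- The iterated coproduct `Δⁿ : H → H^{⊗n}`, with `Δ⁰ := ε` and
    `Δ^{n+1} := (id ⊗ Δⁿ) ∘ Δ`. -/
noncomputable def DeltaIter : (n : ℕ) → H →ₗ[R] TP R H n
  | 0 => (PiTensorProduct.isEmptyEquiv (ι := Fin 0)).symm.toLinearMap
          ∘ₗ (Coalgebra.counit : H →ₗ[R] R)
  | n + 1 => step R H n ∘ₗ LinearMap.lTensor H (DeltaIter n)
              ∘ₗ (Coalgebra.comul : H →ₗ[R] H ⊗[R] H)

/-- The partial iterated coproduct `Δ_Σ = j_Σ ∘ Δ^{|Σ|}`, realized as the full iterated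
    coproduct `Δⁿ` followed by applying `η ∘ ε` in every tensor position outside `Σ`
    (and the identity in the positions of `Σ`). -/
noncomputable def DeltaSub (n : ℕ) (S : Finset (Fin n)) : H →ₗ[R] TP R H n :=
  (PiTensorProduct.map fun i =>
      if i ∈ S then (LinearMap.id : H →ₗ[R] H)
      else Algebra.linearMap R H ∘ₗ (Coalgebra.counit : H →ₗ[R] R))
    ∘ₗ DeltaIter R H n

/-- `δ_Φ := Σ_{Σ'⊆Φ} (−1)^{|Φ|−|Σ'|} Δ_{Σ'}` (in particular `δ_∅ = Δ_∅ = ε`). -/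
noncomputable def deltaF (n : ℕ) (Φ : Finset (Fin n)) : H →ₗ[R] TP R H n :=
  ∑ S ∈ Φ.powerset, ((-1 : ℤ) ^ (Φ.card - S.card)) • DeltaSub R H n S

section

variable {R H}

theorem step_tmul_tprod {n : ℕ} (a : H) (u : Fin n → H) :
    step R H n (a ⊗ₜ tprod R u) = tprod R (Fin.cons a u : Fin (n + 1) → H) := by
  simp only [step, LinearMap.comp_apply, LinearMap.rTensor_tmul, LinearEquiv.coe_coe,
    subsingletonEquiv_symm_apply, tmulEquiv_apply, reindex_tprod]
  congr 1
  funext i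
  cases i using Fin.cases with
  | zero => rfl
  | succ j =>
    have hj : (finCongr (Nat.add_comm 1 n)).symm j.succ = Fin.natAdd 1 j := Fin.ext (by simp; omega)
    rw [Equiv.symm_trans_apply, hj, finSumFinEquiv_symm_apply_natAdd]
    rfl

theorem step_map_mul {n : ℕ} (x y : H ⊗[R] TP R H n) :
    step R H n (x * y) = step R H n x * step R H n y :=
  (step R H n).map_mul_iff.2 (by
    ext a u b v
    simp only [TensorProduct.AlgebraTensorModule.curry_apply, LinearMap.restrictScalars_self,
      TensorProduct.curry_apply, LinearMap.compMultilinearMap_apply, LinearMap.compr₂_apply,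
      LinearMap.compl₂_apply, LinearMap.mul_apply_apply, LinearMap.comp_apply,
      Algebra.TensorProduct.tmul_mul_tmul, tprod_mul_tprod, step_tmul_tprod]
    congr 1
    funext i
    cases i using Fin.cases <;> simp) x y

theorem DeltaIter_map_mul (n : ℕ) (x y : H) :
    DeltaIter R H n (x * y) = DeltaIter R H n x * DeltaIter R H n y := by
  induction n generalizing x y with
  | zero =>
    simp only [DeltaIter, LinearMap.coe_comp, LinearEquiv.coe_coe, Function.comp_apply,
      Bialgebra.counit_mul, isEmptyEquiv_symm_apply, Algebra.mul_smul_comm, Algebra.smul_mul_assoc,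
      tprod_mul_tprod]
    rw [smul_smul, mul_comm, Subsingleton.elim (α := Fin 0 → H) (isEmptyElim * isEmptyElim)]
  | succ n ih =>
    simp only [DeltaIter, LinearMap.comp_apply, Bialgebra.comul_mul,
      LinearMap.lTensor_map_mul ih, step_map_mul]

theorem DeltaSub_map_mul (n : ℕ) (S : Finset (Fin n)) (x y : H) :
    DeltaSub R H n S (x * y) = DeltaSub R H n S x * DeltaSub R H n S y := by
  simp only [DeltaSub, LinearMap.comp_apply, DeltaIter_map_mul]
  refine map_map_mul (fun i x y => ?_) _ _
  split_ifs <;> simp [Bialgebra.counit_mul]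

theorem deltaF_apply (n : ℕ) (Φ : Finset (Fin n)) (x : H) :
    deltaF R H n Φ x = ∑ S ∈ Φ.powerset, (-1 : ℤ) ^ (Φ.card - S.card) • DeltaSub R H n S x := by
  rw [deltaF, LinearMap.sum_apply]
  rfl

theorem sum_powerset_deltaF_apply (n : ℕ) (S : Finset (Fin n)) (x : H) :
    ∑ T ∈ S.powerset, deltaF R H n T x = DeltaSub R H n S x := by
  simp only [deltaF_apply]
  exact Finset.sum_powerset_sum_powerset_neg_one_pow_smul S _

end

/-- For all `a, b ∈ H` and every finite `Φ ⊆ {1,…,n}`,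
    `δ_Φ(a·b) = Σ_{Λ∪Y=Φ} δ_Λ(a)·δ_Y(b)`. -/
theorem deltaF_mul (a b : H) (n : ℕ) (Φ : Finset (Fin n)) :
    deltaF R H n Φ (a * b) =
      ∑ p ∈ (Φ.powerset ×ˢ Φ.powerset).filter (fun p => p.1 ∪ p.2 = Φ),
        deltaF R H n p.1 a * deltaF R H n p.2 b := by
  set G : Finset (Fin n) → TP R H n := fun Ψ =>
    ∑ p ∈ (Ψ.powerset ×ˢ Ψ.powerset).filter (fun p => p.1 ∪ p.2 = Ψ),
      deltaF R H n p.1 a * deltaF R H n p.2 b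
  have DeltaSub_mul_eq : ∀ S, DeltaSub R H n S (a * b) = ∑ Ψ ∈ S.powerset, G Ψ := fun S => by
    rw [DeltaSub_map_mul, ← sum_powerset_deltaF_apply, ← sum_powerset_deltaF_apply,
      Finset.sum_powerset_mul_sum_powerset]
  calc deltaF R H n Φ (a * b)
      = ∑ S ∈ Φ.powerset, (-1 : ℤ) ^ (Φ.card - S.card) • ∑ Ψ ∈ S.powerset, G Ψ := by
        simp only [deltaF_apply, DeltaSub_mul_eq]
    _ = G Φ := Finset.sum_powerset_neg_one_pow_smul_sum_powerset Φ G

end GQDP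
end

section
/- Let H be a torsion-free Hopf algebra over C[q,q⁻¹], J := ker(ε : H → C[q,q⁻¹]), and H^∨ := Σ_{n≥0} (q−1)^{−n} Jⁿ inside H ⊗ C(q). Let I_q ⊆ H be a left ideal and two-sided coideal, and set I_q^∨ := Σ_{n≥1} (q−1)^{−n} J^{n−1} I_q. Then I_q^∨ is a left ideal and two-sided coideal of H^∨. -/
set_option synthInstance.maxHeartbeats 1000000
set_option maxHeartbeats 1000000

open scoped TensorProduct
open PiTensorProduct

namespace GQDP

/-- The ground ring `ℂ[q,q⁻¹]` of complex Laurent polynomials. -/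
abbrev R : Type := LaurentPolynomial ℂ

/-- The field `ℂ(q)` of rational functions, realized as the fraction field of `ℂ[q,q⁻¹]`. -/
abbrev K : Type := FractionRing R

/-- The indeterminate `q`, as an element of `ℂ[q,q⁻¹]`. -/
noncomputable def q : R := LaurentPolynomial.T 1

/-- The indeterminate `q`, as an element of `ℂ(q)`. -/
noncomputable def qK : K := algebraMap R K q

/- `A` is a Hopf algebra over `ℂ(q)` (playing the role of `H ⊗_{ℂ[q,q⁻¹]} ℂ(q)`), in which
   all the `ℂ[q,q⁻¹]`-integral forms below live as `R`-submodules. -/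
variable (A : Type*) [Ring A] [HopfAlgebra K A] [Algebra R A] [IsScalarTower R K A]

/-- Scaling of an `R`-submodule of `A` by a scalar `c ∈ ℂ(q)`. -/
noncomputable def ksmul (c : K) (p : Submodule R A) : Submodule R A :=
  Submodule.span R ((fun a => c • a) '' (p : Set A))

/-- The "tensor product" of two `R`-submodules of `A` inside `A ⊗[ℂ(q)] A`: the additive
    subgroup generated by the corresponding pure tensors (this is also their `R`-span). -/
noncomputable def tsubK (P Q : Submodule R A) : AddSubgroup (A ⊗[K] A) :=
  AddSubgroup.closure {z | ∃ p ∈ P, ∃ r ∈ Q, z = p ⊗ₜ[K] r}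

/-- The augmentation ideal `J := H ∩ ker ε` of an integral form `H ⊆ A`. -/
noncomputable def Jform (H : Submodule R A) : Submodule R A :=
  H ⊓ (LinearMap.ker (Coalgebra.counit : A →ₗ[K] K)).restrictScalars R

/-- Drinfeld's algebra `H^∨ := Σ_{n≥0} (q−1)^{−n} Jⁿ`. -/
noncomputable def Hvee (H : Submodule R A) : Submodule R A :=
  ⨆ n : ℕ, ksmul A (((qK - 1)⁻¹) ^ n) ((Jform A H) ^ n)

/-- `H` is a Hopf-algebra integral form of `A` over `ℂ[q,q⁻¹]`: a unital `R`-subalgebra,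
    with `Δ(H) ⊆ H ⊗ H`, `ε(H) ⊆ ℂ[q,q⁻¹]` and `S(H) ⊆ H`. -/
structure IsHopfForm (H : Submodule R A) : Prop where
  one_mem : (1 : A) ∈ H
  mul_mem : ∀ x ∈ H, ∀ y ∈ H, x * y ∈ H
  comul_mem : ∀ x ∈ H, Coalgebra.comul (R := K) x ∈ tsubK A H H
  counit_mem : ∀ x ∈ H, ∃ r : R, Coalgebra.counit (R := K) x = algebraMap R K r
  antipode_mem : ∀ x ∈ H, HopfAlgebra.antipode (R := K) x ∈ H

/-- `I^∨ := Σ_{n≥1} (q−1)^{−n} J^{n−1}·I`. -/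
noncomputable def Ivee (H I : Submodule R A) : Submodule R A :=
  ⨆ n : ℕ, ksmul A (((qK - 1)⁻¹) ^ (n + 1)) (((Jform A H) ^ n) * I)

end GQDP

/-! Write `c = (q - 1)⁻¹` and `T = H^∨ ⊗ I^∨ + I^∨ ⊗ H^∨`; it suffices to show `c^{n+1} Δ(z) ∈ T`
for `z ∈ Jⁿ I`. Since `H^∨` is a subalgebra with `H^∨ I^∨ ⊆ I^∨`, `T` is stable under left
multiplication by `H^∨ ⊗ H^∨`, so by induction on `n` it is enough that `c Δ(J) ⊆ H^∨ ⊗ H^∨` and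
`c Δ(I) ⊆ T`. Both follow from `H ⊆ H^∨`, `c J ⊆ H^∨` and `c I ⊆ I^∨`, once `J` is known to be a
coideal of `H`: `Δ j = (id ⊗ π) Δ j + j ⊗ 1`, where `π x = x - ε(x) 1` maps `H` into `J`. -/

namespace GQDP

variable {A : Type*} [Ring A] [HopfAlgebra K A]

lemma qK_ne_one : qK ≠ 1 := by
  rw [qK, ← map_one (algebraMap R K), (IsFractionRing.injective R K).ne_iff, q]
  intro h
  have h₁ := congrArg (fun p : R => p.coeff 1) (h.trans LaurentPolynomial.T_zero.symm)
  simp only [LaurentPolynomial.T_apply] at h₁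
  simp at h₁

noncomputable def augProj : A →ₗ[K] A :=
  LinearMap.id - Algebra.linearMap K A ∘ₗ Coalgebra.counit

lemma augProj_apply (x : A) : augProj x = x - Coalgebra.counit (R := K) x • 1 := by
  simp [augProj, Algebra.algebraMap_eq_smul_one]

lemma lTensor_augProj_comul (x : A) :
    augProj.lTensor A (Coalgebra.comul (R := K) x) = Coalgebra.comul (R := K) x - x ⊗ₜ[K] 1 := by
  rw [augProj, LinearMap.lTensor_sub, LinearMap.lTensor_id, LinearMap.lTensor_comp,
    LinearMap.sub_apply, LinearMap.comp_apply, Coalgebra.lTensor_counit_comul]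
  simp

variable [Algebra R A] {P Q P' Q' : Submodule R A}

lemma smul_mem_ksmul (c : K) {p : A} (hp : p ∈ P) : c • p ∈ ksmul A c P :=
  Submodule.subset_span ⟨p, hp, rfl⟩

lemma tmul_mem_tsubK {p r : A} (hp : p ∈ P) (hr : r ∈ Q) : p ⊗ₜ[K] r ∈ tsubK A P Q :=
  AddSubgroup.subset_closure ⟨p, hp, r, hr, rfl⟩

lemma tsubK_mono (hP : P ≤ P') (hQ : Q ≤ Q') : tsubK A P Q ≤ tsubK A P' Q' :=
  AddSubgroup.closure_mono <| by
    rintro _ ⟨p, hp, r, hr, rfl⟩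
    exact ⟨p, hP hp, r, hQ hr, rfl⟩

lemma apply_mem_of_mem_tsubK {M : Type*} [AddCommGroup M] (f : A ⊗[K] A →+ M)
    {T : AddSubgroup M} (h : ∀ p ∈ P, ∀ r ∈ Q, f (p ⊗ₜ[K] r) ∈ T) {t : A ⊗[K] A}
    (ht : t ∈ tsubK A P Q) : f t ∈ T :=
  (AddSubgroup.closure_le (K := T.comap f)).mpr (by
    rintro _ ⟨p, hp, r, hr, rfl⟩
    exact h p hp r hr) ht

lemma map_mem_tsubK {f g : A →ₗ[K] A} (hf : ∀ p ∈ P, f p ∈ P') (hg : ∀ r ∈ Q, g r ∈ Q')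
    {t : A ⊗[K] A} (ht : t ∈ tsubK A P Q) : TensorProduct.map f g t ∈ tsubK A P' Q' :=
  apply_mem_of_mem_tsubK (TensorProduct.map f g).toAddMonoidHom
    (fun p hp r hr => tmul_mem_tsubK (hf p hp) (hg r hr)) ht

lemma mul_mem_tsubK {s t : A ⊗[K] A} (hs : s ∈ tsubK A P Q) (ht : t ∈ tsubK A P' Q') :
    s * t ∈ tsubK A (P * P') (Q * Q') := by
  refine apply_mem_of_mem_tsubK (AddMonoidHom.mulRight t) (fun p hp r hr => ?_) hs
  refine apply_mem_of_mem_tsubK (AddMonoidHom.mulLeft (p ⊗ₜ[K] r)) (fun p' hp' r' hr' => ?_) ht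
  simpa only [AddMonoidHom.coe_mulLeft, Algebra.TensorProduct.tmul_mul_tmul] using
    tmul_mem_tsubK (Submodule.mul_mem_mul hp hp') (Submodule.mul_mem_mul hr hr')

lemma smul_mem_tsubK_left (c : K) {t : A ⊗[K] A} (ht : t ∈ tsubK A P Q) :
    c • t ∈ tsubK A (ksmul A c P) Q :=
  apply_mem_of_mem_tsubK (DistribSMul.toAddMonoidHom _ c) (fun p hp r hr => by
    simpa only [DistribSMul.toAddMonoidHom_apply, TensorProduct.smul_tmul'] using
      tmul_mem_tsubK (smul_mem_ksmul c hp) hr) ht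

lemma smul_mem_tsubK_right (c : K) {t : A ⊗[K] A} (ht : t ∈ tsubK A P Q) :
    c • t ∈ tsubK A P (ksmul A c Q) :=
  apply_mem_of_mem_tsubK (DistribSMul.toAddMonoidHom _ c) (fun p hp r hr => by
    simpa only [DistribSMul.toAddMonoidHom_apply, TensorProduct.tmul_smul] using
      tmul_mem_tsubK hp (smul_mem_ksmul c hr)) ht

lemma smul_mem_tsubK_sup (c : K) (hP : P ≤ P') (hQ : ksmul A c Q ≤ Q') {t : A ⊗[K] A}
    (ht : t ∈ tsubK A P Q ⊔ tsubK A Q P) : c • t ∈ tsubK A P' Q' ⊔ tsubK A Q' P' := by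
  obtain ⟨t₁, ht₁, t₂, ht₂, rfl⟩ := AddSubgroup.mem_sup.mp ht
  rw [smul_add]
  exact add_mem (AddSubgroup.mem_sup_left (tsubK_mono hP hQ (smul_mem_tsubK_right c ht₁)))
    (AddSubgroup.mem_sup_right (tsubK_mono hQ hP (smul_mem_tsubK_left c ht₂)))

lemma mul_mem_tsubK_sup (hPP : P * P ≤ P) (hPQ : P * Q ≤ Q) {s t : A ⊗[K] A}
    (hs : s ∈ tsubK A P P) (ht : t ∈ tsubK A P Q ⊔ tsubK A Q P) :
    s * t ∈ tsubK A P Q ⊔ tsubK A Q P := by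
  obtain ⟨t₁, ht₁, t₂, ht₂, rfl⟩ := AddSubgroup.mem_sup.mp ht
  rw [mul_add]
  exact add_mem (AddSubgroup.mem_sup_left (tsubK_mono hPP hPQ (mul_mem_tsubK hs ht₁)))
    (AddSubgroup.mem_sup_right (tsubK_mono hPQ hPP (mul_mem_tsubK hs ht₂)))

lemma counit_eq_zero_of_mem_mul (hcounit : ∀ x ∈ Q, Coalgebra.counit (R := K) x = 0)
    {z : A} (hz : z ∈ P * Q) : Coalgebra.counit (R := K) z = 0 := by
  induction hz using Submodule.mul_induction_on' with
  | mem_mul_mem a _ b hb => rw [Bialgebra.counit_mul, hcounit b hb, mul_zero]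
  | add u _ v _ hu hv => rw [map_add, hu, hv, add_zero]

variable [IsScalarTower R K A]

lemma mem_ksmul_iff {c : K} {x : A} : x ∈ ksmul A c P ↔ ∃ p ∈ P, c • p = x := by
  rw [ksmul, show (fun a : A => c • a) = ((c • LinearMap.id : A →ₗ[K] A).restrictScalars R)
    from rfl, Submodule.span_image, Submodule.span_eq]
  rfl

lemma ksmul_mul_ksmul (c d : K) : ksmul A c P * ksmul A d Q ≤ ksmul A (c * d) (P * Q) := by
  refine Submodule.mul_le.mpr fun x hx y hy => ?_
  obtain ⟨p, hp, rfl⟩ := mem_ksmul_iff.mp hx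
  obtain ⟨r, hr, rfl⟩ := mem_ksmul_iff.mp hy
  rw [smul_mul_smul_comm]
  exact smul_mem_ksmul _ (Submodule.mul_mem_mul hp hr)

lemma qK_sub_one_smul_mem {x : A} (hx : x ∈ P) : (qK - 1) • x ∈ P := by
  rw [qK, ← map_one (algebraMap R K), ← map_sub, algebraMap_smul]
  exact P.smul_mem _ hx

section Drinfeld

variable {H I : Submodule R A}

lemma smul_mem_Hvee {n : ℕ} {u : A} (hu : u ∈ Jform A H ^ n) :
    ((qK - 1)⁻¹) ^ n • u ∈ Hvee A H :=
  Submodule.mem_iSup_of_mem n (smul_mem_ksmul _ hu)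

lemma smul_mem_Ivee {n : ℕ} {v : A} (hv : v ∈ Jform A H ^ n * I) :
    ((qK - 1)⁻¹) ^ (n + 1) • v ∈ Ivee A H I :=
  Submodule.mem_iSup_of_mem n (smul_mem_ksmul _ hv)

lemma ksmul_Jform_le_Hvee : ksmul A (qK - 1)⁻¹ (Jform A H) ≤ Hvee A H := fun _ hx => by
  obtain ⟨j, hj, rfl⟩ := mem_ksmul_iff.mp hx
  simpa using smul_mem_Hvee (n := 1) (by simpa using hj)

lemma ksmul_le_Ivee : ksmul A (qK - 1)⁻¹ I ≤ Ivee A H I := fun _ hy => by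
  obtain ⟨x, hx, rfl⟩ := mem_ksmul_iff.mp hy
  simpa using smul_mem_Ivee (H := H) (n := 0) (by simpa using hx)

lemma Jform_le_Hvee : Jform A H ≤ Hvee A H := fun j hj => by
  have hj' : j = (qK - 1) • (qK - 1)⁻¹ • j := by
    rw [smul_smul, mul_inv_cancel₀ (sub_ne_zero.mpr qK_ne_one), one_smul]
  rw [hj']
  exact qK_sub_one_smul_mem (ksmul_Jform_le_Hvee (smul_mem_ksmul _ hj))

lemma Hvee_mul_Hvee : Hvee A H * Hvee A H ≤ Hvee A H := by
  rw [Hvee, Submodule.iSup_mul]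
  refine iSup_le fun n => ?_
  rw [Submodule.mul_iSup]
  refine iSup_le fun m => (ksmul_mul_ksmul _ _).trans ?_
  rw [← pow_add, ← pow_add]
  exact le_iSup (fun k => ksmul A (((qK - 1)⁻¹) ^ k) (Jform A H ^ k)) (n + m)

lemma Hvee_mul_Ivee : Hvee A H * Ivee A H I ≤ Ivee A H I := by
  rw [Hvee, Submodule.iSup_mul]
  refine iSup_le fun n => ?_
  rw [Ivee, Submodule.mul_iSup]
  refine iSup_le fun m => (ksmul_mul_ksmul _ _).trans ?_
  rw [← pow_add, ← mul_assoc, ← pow_add, ← add_assoc]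
  exact le_iSup (fun k => ksmul A (((qK - 1)⁻¹) ^ (k + 1)) (Jform A H ^ k * I)) (n + m)

lemma augProj_mem_Jform (hH : IsHopfForm A H) {h : A} (hh : h ∈ H) : augProj h ∈ Jform A H := by
  obtain ⟨r, hr⟩ := hH.counit_mem h hh
  refine ⟨?_, ?_⟩
  · rw [augProj_apply, hr, algebraMap_smul]
    exact H.sub_mem hh (H.smul_mem r hH.one_mem)
  · simp [augProj_apply, Bialgebra.counit_one]

lemma le_Hvee (hH : IsHopfForm A H) : H ≤ Hvee A H := fun h hh => by
  obtain ⟨r, hr⟩ := hH.counit_mem h hh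
  have hdecomp : h = algebraMap R A r + augProj h := by
    rw [augProj_apply, hr, algebraMap_smul, Algebra.algebraMap_eq_smul_one]
    abel
  have hr₁ : algebraMap R A r ∈ Hvee A H := by
    simpa using smul_mem_Hvee (H := H) (n := 0) (by simp)
  rw [hdecomp]
  exact add_mem hr₁ (Jform_le_Hvee (augProj_mem_Jform hH hh))

lemma comul_mem_of_mem_Jform (hH : IsHopfForm A H) {j : A} (hj : j ∈ Jform A H) :
    Coalgebra.comul (R := K) j ∈ tsubK A H (Jform A H) ⊔ tsubK A (Jform A H) H := by
  have hdecomp : Coalgebra.comul (R := K) j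
      = augProj.lTensor A (Coalgebra.comul (R := K) j) + j ⊗ₜ[K] 1 := by
    rw [lTensor_augProj_comul]
    abel
  rw [hdecomp]
  exact add_mem
    (AddSubgroup.mem_sup_left (map_mem_tsubK (fun _ hp => hp)
      (fun _ hr => augProj_mem_Jform hH hr) (hH.comul_mem j hj.1)))
    (AddSubgroup.mem_sup_right (tmul_mem_tsubK hj hH.one_mem))

lemma smul_comul_mem_of_mem_Jform (hH : IsHopfForm A H) {j : A} (hj : j ∈ Jform A H) :
    (qK - 1)⁻¹ • Coalgebra.comul (R := K) j ∈ tsubK A (Hvee A H) (Hvee A H) := by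
  simpa only [sup_idem] using
    smul_mem_tsubK_sup _ (le_Hvee hH) ksmul_Jform_le_Hvee (comul_mem_of_mem_Jform hH hj)

lemma smul_comul_mem_of_mem_pow_mul (hH : IsHopfForm A H)
    (hcoideal : ∀ x ∈ I, Coalgebra.comul (R := K) x ∈ tsubK A H I ⊔ tsubK A I H) (n : ℕ)
    {z : A} (hz : z ∈ Jform A H ^ n * I) :
    ((qK - 1)⁻¹) ^ (n + 1) • Coalgebra.comul (R := K) z ∈
      tsubK A (Hvee A H) (Ivee A H I) ⊔ tsubK A (Ivee A H I) (Hvee A H) := by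
  induction n generalizing z with
  | zero =>
    rw [pow_zero, one_mul] at hz
    simpa using smul_mem_tsubK_sup _ (le_Hvee hH) ksmul_le_Ivee (hcoideal z hz)
  | succ n ih =>
    rw [pow_succ', mul_assoc] at hz
    induction hz using Submodule.mul_induction_on' with
    | mem_mul_mem j hj w hw =>
      rw [Bialgebra.comul_mul, pow_succ', ← smul_mul_smul_comm]
      exact mul_mem_tsubK_sup Hvee_mul_Hvee Hvee_mul_Ivee
        (smul_comul_mem_of_mem_Jform hH hj) (ih hw)
    | add x _ y _ hx hy =>
      rw [map_add, smul_add]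
      exact add_mem hx hy

lemma comul_mem_of_mem_Ivee (hH : IsHopfForm A H)
    (hcoideal : ∀ x ∈ I, Coalgebra.comul (R := K) x ∈ tsubK A H I ⊔ tsubK A I H)
    {x : A} (hx : x ∈ Ivee A H I) :
    Coalgebra.comul (R := K) x ∈
      tsubK A (Hvee A H) (Ivee A H I) ⊔ tsubK A (Ivee A H I) (Hvee A H) := by
  refine Submodule.iSup_induction _ (motive := fun x => Coalgebra.comul (R := K) x ∈ _) hx
    (fun n y hy => ?_) (by simp) fun x y hx hy => ?_
  · obtain ⟨z, hz, rfl⟩ := mem_ksmul_iff.mp hy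
    rw [map_smul]
    exact smul_comul_mem_of_mem_pow_mul hH hcoideal n hz
  · rw [map_add]
    exact add_mem hx hy

lemma counit_eq_zero_of_mem_Ivee (hcounit : ∀ x ∈ I, Coalgebra.counit (R := K) x = 0)
    {x : A} (hx : x ∈ Ivee A H I) : Coalgebra.counit (R := K) x = 0 := by
  refine Submodule.iSup_induction _ (motive := fun x => Coalgebra.counit (R := K) x = 0) hx
    (fun n y hy => ?_) (by simp) fun x y hx hy => ?_
  · obtain ⟨z, hz, rfl⟩ := mem_ksmul_iff.mp hy
    rw [map_smul, counit_eq_zero_of_mem_mul hcounit hz, smul_zero]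
  · rw [map_add, hx, hy, add_zero]

end Drinfeld

variable (A)

theorem Ivee_leftIdeal_coideal (H I : Submodule R A) (hH : IsHopfForm A H)
    (hcoideal : ∀ x ∈ I, Coalgebra.comul (R := K) x ∈ tsubK A H I ⊔ tsubK A I H)
    (hcounit : ∀ x ∈ I, Coalgebra.counit (R := K) x = 0) :
    (∀ a ∈ Hvee A H, ∀ x ∈ Ivee A H I, a * x ∈ Ivee A H I) ∧
    (∀ x ∈ Ivee A H I,
      Coalgebra.comul (R := K) x ∈
        tsubK A (Hvee A H) (Ivee A H I) ⊔ tsubK A (Ivee A H I) (Hvee A H) ∧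
      Coalgebra.counit (R := K) x = 0) :=
  ⟨fun _ ha _ hx => Hvee_mul_Ivee (Submodule.mul_mem_mul ha hx),
    fun _ hx => ⟨comul_mem_of_mem_Ivee hH hcoideal hx, counit_eq_zero_of_mem_Ivee hcounit hx⟩⟩

end GQDP
end
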